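/- Let R be a finite local ring of odd characteristic and let β be a non-degenerate symmetric bilinear form on R² with associated matrix B. Then there exist an invertible 2×2 matrix P over R and an element u ∈ R, where either u = 1 or u is a non-square unit of R, such that Pᵀ B P is the diagonal matrix diag(1, −u); that is, β is equivalent to the form ((x₁,x₂),(y₁,y₂)) ↦ x₁y₁ − u·x₂y₂. -/

import Mathlib

/-!
Since `2` is a unit, a non-degenerate binary form takes a unit value at one of `e₀`, `e₁`,
`e₀ + e₁`; splitting off that vector diagonalizes it as `diag(a, c)` with `a, c` units. Over the
residue field, a finite field of odd order, `a x² + c y² = 1` is solvable, and since a finite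
local ring is Henselian the solution lifts to `R` with one coordinate a unit. Splitting off this
vector gives `diag(1, c')`; finally `c'` becomes `-1` after rescaling when `-c'` is a square.
-/

open Matrix IsLocalRing

theorem isUnit_two_of_odd_ringChar {R : Type*} [CommRing R] (h : Odd (ringChar R)) :
    IsUnit (2 : R) := by
  obtain ⟨k, hk⟩ := h
  have hp : ((2 * k + 1 : ℕ) : R) = 0 := hk ▸ ringChar.Nat.cast_ringChar
  push_cast at hp
  exact .of_mul_eq_one (-(k : R)) (by linear_combination -hp)

theorem ringChar_residueField_ne_two {R : Type*} [CommRing R] [IsLocalRing R]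
    (h2 : IsUnit (2 : R)) : ringChar (ResidueField R) ≠ 2 := by
  intro h
  have h2' := (residue_ne_zero_iff_isUnit (2 : R)).mpr h2
  rw [map_ofNat] at h2'
  have := ringChar.Nat.cast_ringChar (R := ResidueField R)
  rw [h] at this
  exact h2' (by exact_mod_cast this)

open Polynomial in
theorem FiniteField.exists_mul_sq_add_mul_sq_eq_one {F : Type*} [Field F] [Fintype F]
    (hF : ringChar F ≠ 2) {a c : F} (ha : a ≠ 0) (hc : c ≠ 0) :
    ∃ x y : F, a * x ^ 2 + c * y ^ 2 = 1 := by
  have hg : (C c * X ^ 2 - C 1).degree = 2 := by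
    rw [degree_sub_C] <;> rw [degree_C_mul_X_pow 2 hc]
    · rfl
    · norm_num
  obtain ⟨x, y, h⟩ := FiniteField.exists_root_sum_quadratic (degree_C_mul_X_pow 2 ha) hg
    (FiniteField.odd_card_of_char_ne_two hF)
  simp only [eval_sub, eval_mul, eval_pow, eval_C, eval_X] at h
  exact ⟨x, y, by linear_combination h⟩

section Henselian

variable {R : Type*} [CommRing R] [IsLocalRing R] [HenselianRing R (maximalIdeal R)]

open Polynomial in
theorem exists_isUnit_sq_eq_of_residue (h2 : IsUnit (2 : R)) {a : R} {ξ : ResidueField R}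
    (hξ : ξ ≠ 0) (h : ξ ^ 2 = residue R a) : ∃ x : R, IsUnit x ∧ x ^ 2 = a := by
  obtain ⟨x₀, rfl⟩ := residue_surjective ξ
  have hx₀ : IsUnit x₀ := (residue_ne_zero_iff_isUnit x₀).mp hξ
  obtain ⟨x, hroot, hxx₀⟩ := HenselianRing.is_henselian (I := maximalIdeal R) (X ^ 2 - C a)
    (monic_X_pow_sub_C a two_ne_zero) x₀
    (by
      rw [← Ideal.Quotient.eq_zero_iff_mem]
      change residue R _ = 0
      simpa [sub_eq_zero] using h)
    (by
      change IsUnit (residue R _)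
      rw [show (derivative (X ^ 2 - C a)).eval x₀ = 2 * x₀ by simp; ring]
      exact (h2.mul hx₀).map _)
  refine ⟨x, ?_, by simpa [sub_eq_zero] using hroot⟩
  rwa [← residue_ne_zero_iff_isUnit,
    show residue R x = residue R x₀ from Ideal.Quotient.eq.mpr hxx₀]

theorem exists_isUnit_mul_sq_add_mul_sq_eq_one_of_residue (h2 : IsUnit (2 : R)) {a c : R}
    (ha : IsUnit a) {ξ η : ResidueField R} (hξ : ξ ≠ 0)
    (h : residue R a * ξ ^ 2 + residue R c * η ^ 2 = 1) :
    ∃ x y : R, IsUnit x ∧ a * x ^ 2 + c * y ^ 2 = 1 := by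
  obtain ⟨y, rfl⟩ := residue_surjective η
  obtain ⟨b, hb⟩ := ha.exists_left_inv
  have hb' : residue R b * residue R a = 1 := by rw [← map_mul, hb, map_one]
  obtain ⟨x, hx, hx2⟩ := exists_isUnit_sq_eq_of_residue h2 hξ (a := b * (1 - c * y ^ 2))
    (by
      simp only [map_mul, map_sub, map_one, map_pow]
      linear_combination residue R b * h - ξ ^ 2 * hb')
  exact ⟨x, y, hx, by rw [hx2]; linear_combination (1 - c * y ^ 2) * hb⟩

theorem exists_mul_sq_add_mul_sq_eq_one [Finite (ResidueField R)] (h2 : IsUnit (2 : R))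
    {a c : R} (ha : IsUnit a) (hc : IsUnit c) :
    ∃ x y : R, (IsUnit x ∨ IsUnit y) ∧ a * x ^ 2 + c * y ^ 2 = 1 := by
  have := Fintype.ofFinite (ResidueField R)
  obtain ⟨ξ, η, h⟩ := FiniteField.exists_mul_sq_add_mul_sq_eq_one
    (ringChar_residueField_ne_two h2) ((residue_ne_zero_iff_isUnit a).mpr ha)
    ((residue_ne_zero_iff_isUnit c).mpr hc)
  by_cases hξ : ξ = 0
  · have hη : η ≠ 0 := by rintro rfl; simp [hξ] at h
    obtain ⟨y, x, hy, h⟩ :=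
      exists_isUnit_mul_sq_add_mul_sq_eq_one_of_residue h2 hc hη (c := a) (η := ξ)
        (by linear_combination h)
    exact ⟨x, y, .inr hy, by linear_combination h⟩
  · obtain ⟨x, y, hx, h⟩ := exists_isUnit_mul_sq_add_mul_sq_eq_one_of_residue h2 ha hξ h
    exact ⟨x, y, .inl hx, h⟩

end Henselian

namespace Matrix

variable {n R : Type*} [Fintype n] [DecidableEq n] [CommRing R]

def Congruent (A B : Matrix n n R) : Prop :=
  ∃ P : Matrix n n R, IsUnit P.det ∧ Pᵀ * A * P = B

namespace Congruent

theorem refl (A : Matrix n n R) : Congruent A A :=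
  ⟨1, by simp, by simp⟩

theorem trans {A B C : Matrix n n R} (hAB : Congruent A B) (hBC : Congruent B C) :
    Congruent A C := by
  obtain ⟨P, hP, rfl⟩ := hAB
  obtain ⟨Q, hQ, rfl⟩ := hBC
  refine ⟨P * Q, by rw [det_mul]; exact hP.mul hQ, ?_⟩
  simp only [transpose_mul, Matrix.mul_assoc]

theorem isSymm {A B : Matrix n n R} (h : Congruent A B) (hA : A.IsSymm) : B.IsSymm := by
  obtain ⟨P, -, rfl⟩ := h
  simp only [IsSymm, transpose_mul, transpose_transpose, hA.eq, Matrix.mul_assoc]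

theorem isUnit_det {A B : Matrix n n R} (h : Congruent A B) (hA : IsUnit A.det) :
    IsUnit B.det := by
  obtain ⟨P, hP, rfl⟩ := h
  rw [det_mul, det_mul, det_transpose]
  exact (hP.mul hA).mul hP

end Congruent

section Fin2

variable {R : Type*} [CommRing R]

theorem congruent_diagonal_of_isUnit_apply_zero_zero {M : Matrix (Fin 2) (Fin 2) R}
    (hM : M.IsSymm) (h : IsUnit (M 0 0)) :
    ∃ c, M 0 0 * c = M.det ∧ Congruent M (diagonal ![M 0 0, c]) := by
  obtain ⟨w, hw⟩ := h.exists_right_inv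
  have hM10 : M 1 0 = M 0 1 := hM.apply 0 1
  refine ⟨M 1 1 - M 0 1 ^ 2 * w, ?_, !![1, -M 0 1 * w; 0, 1], by simp [det_fin_two], ?_⟩
  · rw [det_fin_two, hM10]
    linear_combination (-M 0 1 ^ 2) * hw
  · ext i j
    fin_cases i <;> fin_cases j <;>
      simp only [mul_apply, transpose_apply, of_apply, cons_val', cons_val_zero, cons_val_one,
        cons_val_fin_one, Fin.sum_univ_two, Fin.isValue, Fin.zero_eta, Fin.mk_one, hM10,
        diagonal_apply_eq, diagonal_apply_ne _ zero_ne_one, diagonal_apply_ne _ one_ne_zero]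
    · ring
    · linear_combination (-M 0 1) * hw
    · linear_combination (-M 0 1) * hw
    · linear_combination M 0 1 ^ 2 * w * hw

theorem exists_congruent_apply_zero_zero (M : Matrix (Fin 2) (Fin 2) R) {v : Fin 2 → R}
    (hv : IsUnit (v 0) ∨ IsUnit (v 1)) : ∃ N, Congruent M N ∧ N 0 0 = v ⬝ᵥ M *ᵥ v := by
  have hN00 (b d : R) :
      (!![v 0, b; v 1, d]ᵀ * M * !![v 0, b; v 1, d]) 0 0 = v ⬝ᵥ M *ᵥ v := by
    simp only [mul_apply, transpose_apply, of_apply, cons_val', cons_val_zero, cons_val_one,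
      cons_val_fin_one, Fin.sum_univ_two, dotProduct, mulVec]
    ring
  rcases hv with hv | hv
  · exact ⟨_, ⟨!![v 0, 0; v 1, 1], by simpa [det_fin_two] using hv, rfl⟩, hN00 0 1⟩
  · exact ⟨_, ⟨!![v 0, 1; v 1, 0], by simpa [det_fin_two] using hv.neg, rfl⟩, hN00 1 0⟩

theorem congruent_diagonal_of_isUnit_dotProduct_mulVec {M : Matrix (Fin 2) (Fin 2) R}
    (hM : M.IsSymm) (hdet : IsUnit M.det) {v : Fin 2 → R} (hv : IsUnit (v 0) ∨ IsUnit (v 1))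
    (hq : IsUnit (v ⬝ᵥ M *ᵥ v)) :
    ∃ c, IsUnit c ∧ Congruent M (diagonal ![v ⬝ᵥ M *ᵥ v, c]) := by
  obtain ⟨N, hMN, hN00⟩ := exists_congruent_apply_zero_zero M hv
  obtain ⟨c, hc, hN⟩ :=
    congruent_diagonal_of_isUnit_apply_zero_zero (hMN.isSymm hM) (hN00 ▸ hq)
  exact ⟨c, isUnit_of_mul_isUnit_right (hc ▸ hMN.isUnit_det hdet), hN00 ▸ hMN.trans hN⟩

theorem exists_isUnit_dotProduct_mulVec [IsLocalRing R] (h2 : IsUnit (2 : R))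
    {M : Matrix (Fin 2) (Fin 2) R} (hM : M.IsSymm) (hdet : IsUnit M.det) :
    ∃ v : Fin 2 → R, (IsUnit (v 0) ∨ IsUnit (v 1)) ∧ IsUnit (v ⬝ᵥ M *ᵥ v) := by
  by_contra! h
  have h00 := h ![1, 0] (by simp)
  have h11 := h ![0, 1] (by simp)
  have hsum := h ![1, 1] (by simp)
  simp only [dotProduct, mulVec, Fin.sum_univ_two, hM.apply 0 1] at h00 h11 hsum
  simp only [cons_val_zero, cons_val_one, cons_val_fin_one, mul_one, mul_zero, one_mul, zero_mul,
    add_zero, zero_add, ← mem_nonunits_iff, ← mem_maximalIdeal] at h00 h11 hsum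
  have h2b : 2 * M 0 1 ∈ maximalIdeal R := by
    convert sub_mem (sub_mem hsum h00) h11 using 1
    ring
  have hb := (Ideal.unit_mul_mem_iff_mem _ h2).mp h2b
  refine (mem_maximalIdeal _).mp ?_ hdet
  rw [det_fin_two]
  exact sub_mem (Ideal.mul_mem_right _ _ h00) (Ideal.mul_mem_right _ _ hb)

theorem vec2_dotProduct_diagonal_mulVec (a c x y : R) :
    ![x, y] ⬝ᵥ diagonal ![a, c] *ᵥ ![x, y] = a * x ^ 2 + c * y ^ 2 := by
  simp only [mulVec_diagonal, dotProduct, Fin.sum_univ_two, cons_val_zero, cons_val_one,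
    cons_val_fin_one]
  ring

theorem congruent_diagonal_one_neg {c : R} (hc : IsUnit c) :
    ∃ u, (u = 1 ∨ (IsUnit u ∧ ¬ ∃ r : R, r ^ 2 = u)) ∧
      Congruent (diagonal ![1, c]) (diagonal ![1, -u]) := by
  by_cases hsq : ∃ r : R, r ^ 2 = -c
  · obtain ⟨r, hr⟩ := hsq
    obtain ⟨s, hs⟩ := (isUnit_pow_iff two_ne_zero).mp (hr ▸ hc.neg) |>.exists_right_inv
    refine ⟨1, .inl rfl, diagonal ![1, s], by simpa using IsUnit.of_mul_eq_one_right _ hs, ?_⟩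
    rw [diagonal_transpose, diagonal_mul_diagonal, diagonal_mul_diagonal]
    congr 1
    ext i
    fin_cases i
    · simp
    · simp only [Fin.mk_one, cons_val_one, cons_val_fin_one]
      linear_combination s ^ 2 * hr - (r * s + 1) * hs
  · exact ⟨-c, .inr ⟨hc.neg, hsq⟩, by rw [neg_neg]; exact .refl _⟩

end Fin2

end Matrix

/-- Over a finite local ring `R` of odd characteristic, every non-degenerate
symmetric bilinear form on `R²` with matrix `B` is equivalent to `diag(1, -u)` where
`u = 1` or `u` is a non-square unit. -/
theorem stmt_8 (R : Type*) [CommRing R] [IsLocalRing R] [Fintype R]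
    (hchar : Odd (ringChar R))
    (B : Matrix (Fin 2) (Fin 2) R) (hsymm : B.IsSymm) (hnd : IsUnit B.det) :
    ∃ (P : Matrix (Fin 2) (Fin 2) R) (u : R), IsUnit P.det ∧
      (u = 1 ∨ (IsUnit u ∧ ¬ ∃ r : R, r ^ 2 = u)) ∧
      Pᵀ * B * P = Matrix.diagonal ![1, -u] := by
  have h2 : IsUnit (2 : R) := isUnit_two_of_odd_ringChar hchar
  have : Finite (ResidueField R) := Finite.of_surjective _ residue_surjective
  obtain ⟨v, hv, hq⟩ := exists_isUnit_dotProduct_mulVec h2 hsymm hnd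
  obtain ⟨c, hc, hBD⟩ := congruent_diagonal_of_isUnit_dotProduct_mulVec hsymm hnd hv hq
  obtain ⟨x, y, hxy, hrep⟩ := exists_mul_sq_add_mul_sq_eq_one h2 hq hc
  have hD1 : ![x, y] ⬝ᵥ diagonal ![v ⬝ᵥ B *ᵥ v, c] *ᵥ ![x, y] = 1 :=
    (vec2_dotProduct_diagonal_mulVec _ _ _ _).trans hrep
  obtain ⟨c', hc', hDD'⟩ := congruent_diagonal_of_isUnit_dotProduct_mulVec (isSymm_diagonal _)
    (by simpa [det_fin_two] using hq.mul hc) (v := ![x, y]) hxy (hD1 ▸ isUnit_one)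
  obtain ⟨u, hu, hD'⟩ := congruent_diagonal_one_neg hc'
  obtain ⟨P, hP, hPB⟩ := hBD.trans ((hD1 ▸ hDD').trans hD')
  exact ⟨P, u, hP, hu, hPB⟩
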